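/- arXiv:1004.4800 — 4 statements merged into one kernel-verified Lean document; each statement's English description precedes it below -/
import Mathlib

section
/- For every A in SL(2,R), log((‖A‖ + ‖A‖⁻¹)/2) equals the average over p in the projective line (with normalized Haar measure) of log‖A v_p‖. -/
/-!
Identify `ℝ²` with `ℂ` and write `A z = a z + b z̄` (`a`, `b` the conformal and anticonformal parts
of `A`). Then `‖A v_p‖ = |a e^{2ip} + b|` and `det A = |a|² - |b|²`, so `‖A‖ = |a| + |b|`, and for
`det A = 1` also `‖A‖⁻¹ = |a| - |b|`: the left side is `log |a|`. As `p` runs over `P¹`, `a e^{2ip}`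
runs once around the circle of radius `|a|`, which encloses `-b`; so the average of
`log |a e^{2ip} + b|` is `log |a|` by the mean value property of `log |z + b|`.
-/

open Real MeasureTheory intervalIntegral Matrix Polynomial

noncomputable section

/-- 2×2 real matrices. -/
abbrev Mat := Matrix (Fin 2) (Fin 2) ℝ

/-- The unit vector `v_p = (cos p, sin p)` spanning the line `ℓ_p ∈ P¹ = ℝ/πℤ`. -/
def vec (p : ℝ) : Fin 2 → ℝ := ![Real.cos p, Real.sin p]

/-- Euclidean norm on ℝ². -/
def en (w : Fin 2 → ℝ) : ℝ := Real.sqrt (w 0 ^ 2 + w 1 ^ 2)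

/-- Rotation matrix by angle θ. -/
def Rot (θ : ℝ) : Mat := !![Real.cos θ, -Real.sin θ; Real.sin θ, Real.cos θ]

/-- `parr w q` : the vector `w` is parallel to `v_q` (i.e. `w ∈ ℓ_q`). -/
def parr (w : Fin 2 → ℝ) (q : ℝ) : Prop := w 0 * Real.sin q - w 1 * Real.cos q = 0

/-- `IsLift A Φ` : `Φ : ℝ → ℝ` is a lift (mod π) of the projective action `Φ_A` of `A` on P¹. -/
def IsLift (A : Mat) (Φ : ℝ → ℝ) : Prop := ∀ p : ℝ, parr (A.mulVec (vec p)) (Φ p)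

/-- Operator (Euclidean) norm of a 2×2 matrix: sup of `‖A v_p‖` over the unit circle. -/
def opN (A : Mat) : ℝ := ⨆ p : ℝ, en (A.mulVec (vec p))

/-- Spectral radius of a real 2×2 matrix: the largest modulus of its complex eigenvalues. -/
def spectralRad (B : Mat) : ℝ :=
  sSup {x : ℝ | ∃ z : ℂ, (B.charpoly.map (algebraMap ℝ ℂ)).IsRoot z ∧ x = ‖z‖}

/-- The word product `R_θ A = (R_θ A₁)⋯(R_θ Aₙ)` of a list of matrices. -/
def Wp (θ : ℝ) (l : List Mat) : Mat := (l.map fun B => Rot θ * B).prod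

lemma norm_mul_exp_add_le (a b : ℂ) (θ : ℝ) :
    ‖a * Complex.exp (θ * Complex.I) + b‖ ≤ ‖a‖ + ‖b‖ := by
  simpa [Complex.norm_exp_ofReal_mul_I] using norm_add_le (a * Complex.exp (θ * Complex.I)) b

lemma norm_mul_exp_arg_sub_add (a b : ℂ) :
    ‖a * Complex.exp ((b.arg - a.arg : ℝ) * Complex.I) + b‖ = ‖a‖ + ‖b‖ := by
  have haligned : a * Complex.exp ((b.arg - a.arg : ℝ) * Complex.I) + b =
      (‖a‖ + ‖b‖ : ℝ) * Complex.exp (b.arg * Complex.I) := by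
    nth_rewrite 1 [← Complex.norm_mul_exp_arg_mul_I a]
    nth_rewrite 2 [← Complex.norm_mul_exp_arg_mul_I b]
    rw [mul_assoc, ← Complex.exp_add]
    push_cast
    ring_nf
  rw [haligned, norm_mul, Complex.norm_exp_ofReal_mul_I, mul_one, Complex.norm_real,
    Real.norm_of_nonneg (by positivity)]

lemma integral_log_norm_mul_exp_add {a b : ℂ} (h : ‖b‖ ≤ ‖a‖) :
    ∫ θ in 0..2 * π, Real.log ‖a * Complex.exp (θ * Complex.I) + b‖ =
      2 * π * Real.log ‖a‖ := by
  have hcirc : ∀ θ : ℝ,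
      a * Complex.exp (θ * Complex.I) + b = circleMap 0 ‖a‖ (θ + a.arg) - -b := by
    intro θ
    rw [circleMap_zero, sub_neg_eq_add]
    nth_rewrite 1 [← Complex.norm_mul_exp_arg_mul_I a]
    rw [mul_assoc, ← Complex.exp_add]
    push_cast
    ring_nf
  have hmem : -b ∈ Metric.closedBall (0 : ℂ) |‖a‖| := by
    simpa [abs_norm] using h
  have havg := circleAverage_log_norm_sub_const_of_mem_closedBall hmem
  rw [circleAverage_eq_integral_add a.arg, smul_eq_mul] at havg
  simp_rw [hcirc]
  field_simp at havg ⊢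
  linarith [Real.pi_pos]

def toComplex (w : Fin 2 → ℝ) : ℂ := ⟨w 0, w 1⟩

def conformalPart (A : Mat) : ℂ := ⟨(A 0 0 + A 1 1) / 2, (A 1 0 - A 0 1) / 2⟩

def anticonformalPart (A : Mat) : ℂ := ⟨(A 0 0 - A 1 1) / 2, (A 1 0 + A 0 1) / 2⟩

lemma en_eq_norm_toComplex (w : Fin 2 → ℝ) : en w = ‖toComplex w‖ := by
  rw [en, Complex.norm_def, Complex.normSq_apply, toComplex]
  congr 1
  ring

lemma toComplex_vec (p : ℝ) : toComplex (vec p) = Complex.exp (p * Complex.I) := by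
  apply Complex.ext <;> simp [toComplex, _root_.vec, Complex.exp_ofReal_mul_I_re,
    Complex.exp_ofReal_mul_I_im]

lemma toComplex_mulVec (A : Mat) (w : Fin 2 → ℝ) :
    toComplex (A *ᵥ w) =
      conformalPart A * toComplex w + anticonformalPart A * (starRingEnd ℂ) (toComplex w) := by
  apply Complex.ext <;>
  · simp [toComplex, conformalPart, anticonformalPart, Matrix.mulVec, dotProduct, Fin.sum_univ_two]
    ring

lemma sq_norm_conformalPart_sub_sq_norm_anticonformalPart (A : Mat) :
    ‖conformalPart A‖ ^ 2 - ‖anticonformalPart A‖ ^ 2 = A.det := by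
  simp only [Complex.sq_norm, Complex.normSq_apply, conformalPart, anticonformalPart,
    Matrix.det_fin_two]
  ring

lemma en_mulVec_vec (A : Mat) (p : ℝ) :
    en (A *ᵥ vec p) =
      ‖conformalPart A * Complex.exp ((2 * p : ℝ) * Complex.I) + anticonformalPart A‖ := by
  have hrot : Complex.exp ((-p : ℝ) * Complex.I) *
      (conformalPart A * Complex.exp ((2 * p : ℝ) * Complex.I) + anticonformalPart A) =
      toComplex (A *ᵥ vec p) := by
    rw [toComplex_mulVec, toComplex_vec, ← Complex.exp_conj, map_mul, Complex.conj_ofReal,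
      Complex.conj_I, mul_add, mul_left_comm, ← Complex.exp_add]
    push_cast
    ring_nf
  rw [en_eq_norm_toComplex, ← hrot, norm_mul, Complex.norm_exp_ofReal_mul_I, one_mul]

lemma opN_eq (A : Mat) : opN A = ‖conformalPart A‖ + ‖anticonformalPart A‖ := by
  set a := conformalPart A
  set b := anticonformalPart A
  have hle : ∀ p, en (A *ᵥ vec p) ≤ ‖a‖ + ‖b‖ := fun p =>
    (en_mulVec_vec A p).trans_le (norm_mul_exp_add_le a b _)
  apply le_antisymm (ciSup_le hle)
  calc ‖a‖ + ‖b‖ = en (A *ᵥ vec ((b.arg - a.arg) / 2)) := by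
        rw [en_mulVec_vec, ← norm_mul_exp_arg_sub_add a b]
        congr 4
        push_cast
        ring
    _ ≤ opN A := le_ciSup ⟨‖a‖ + ‖b‖, Set.forall_mem_range.mpr hle⟩ _

lemma integral_log_en_mulVec_vec {A : Mat} (h : ‖anticonformalPart A‖ ≤ ‖conformalPart A‖) :
    ∫ p in (-(π/2))..(π/2), Real.log (en (A *ᵥ vec p)) = π * Real.log ‖conformalPart A‖ := by
  set f : ℝ → ℝ := fun θ =>
    Real.log ‖conformalPart A * Complex.exp (θ * Complex.I) + anticonformalPart A‖
  have hper : Function.Periodic f (2 * π) := by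
    intro θ
    simp only [f]
    push_cast
    rw [add_mul, Complex.exp_add, Complex.exp_two_pi_mul_I, mul_one]
  have hf : ∀ p, Real.log (en (A *ᵥ vec p)) = f (2 * p) := fun p => by
    rw [en_mulVec_vec]
  simp_rw [hf]
  rw [intervalIntegral.integral_comp_mul_left f two_ne_zero, smul_eq_mul,
    show 2 * -(π / 2) = -π by ring, show 2 * (π / 2) = -π + 2 * π by ring,
    hper.intervalIntegral_add_eq (-π) 0, zero_add, integral_log_norm_mul_exp_add h]
  ring

/-- `log((‖A‖+‖A‖⁻¹)/2)` equals the P¹-average of `log ‖A v_p‖`. -/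
theorem stmt1 (A : Mat) (hdet : A.det = 1) :
    Real.log ((opN A + (opN A)⁻¹) / 2)
      = (1 / π) * ∫ p in (-(π/2))..(π/2), Real.log (en (A.mulVec (vec p))) := by
  set a := conformalPart A
  set b := anticonformalPart A
  have hsq : ‖a‖ ^ 2 - ‖b‖ ^ 2 = 1 :=
    hdet ▸ sq_norm_conformalPart_sub_sq_norm_anticonformalPart A
  have hle : ‖b‖ ≤ ‖a‖ := by nlinarith [norm_nonneg a, norm_nonneg b]
  have hinv : (‖a‖ + ‖b‖)⁻¹ = ‖a‖ - ‖b‖ :=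
    inv_eq_of_mul_eq_one_right (by linear_combination hsq)
  rw [integral_log_en_mulVec_vec hle, opN_eq, hinv, one_div, inv_mul_cancel_left₀ Real.pi_ne_zero]
  congr 1
  ring
end
end

section
/- Let A ∈ SL(2,R) be non-orthogonal, with A = S D R its singular value decomposition (D = diag(λ, λ⁻¹), λ > 1, S, R ∈ O(2)), and M = R⁻¹ K R where K has rows (0, λ⁻¹) and (λ, 0). Then for every p ∈ P^1, log‖A v_{Φ_M(p)}‖ = −log‖A v_p‖, where v_q = (cos q, sin q). -/
open Real MeasureTheory intervalIntegral Matrix Polynomial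

noncomputable section

/-!
Write `D = diag(λ, λ⁻¹)` and `K = [[0, λ⁻¹], [λ, 0]]`. Since `S`, `R` are orthogonal, `‖M w‖ = ‖K R w‖`
and `‖A w‖ = ‖D R w‖`, and these agree because `K` and `D` scale the two coordinates by the same
factors, only swapped. Moreover `A M = S (D K) R` with `D K` the coordinate swap, so
`‖A (M w)‖ = ‖w‖`. Writing `M v_p = c v_{Φ_M(p)}`, the first identity gives `|c| = ‖A v_p‖` and the
second gives `|c| ‖A v_{Φ_M(p)}‖ = 1`.
-/

lemma en_mulVec_of_transpose_mul_self {R : Mat} (hR : Rᵀ * R = 1) (v : Fin 2 → ℝ) :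
    en (R *ᵥ v) = en v := by
  have h00 := congrFun (congrFun hR 0) 0
  have h01 := congrFun (congrFun hR 0) 1
  have h11 := congrFun (congrFun hR 1) 1
  simp only [mul_apply, transpose_apply, Fin.sum_univ_two, one_apply, ↓reduceIte,
    zero_ne_one] at h00 h01 h11
  unfold en
  congr 1
  simp only [mulVec, dotProduct, Fin.sum_univ_two]
  linear_combination v 0 ^ 2 * h00 + 2 * v 0 * v 1 * h01 + v 1 ^ 2 * h11

lemma en_smul (c : ℝ) (w : Fin 2 → ℝ) : en (c • w) = |c| * en w := by
  unfold en
  rw [← Real.sqrt_sq_eq_abs, ← Real.sqrt_mul (sq_nonneg c)]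
  simp only [Pi.smul_apply, smul_eq_mul]
  ring_nf

lemma en_vec (q : ℝ) : en (_root_.vec q) = 1 := by
  simp [en, _root_.vec]

lemma eq_smul_vec_of_parr {w : Fin 2 → ℝ} {q : ℝ} (h : parr w q) :
    w = (w 0 * cos q + w 1 * sin q) • _root_.vec q := by
  unfold parr at h
  ext i
  fin_cases i
  · show w 0 = _ * cos q
    linear_combination sin q * h - w 0 * sin_sq_add_cos_sq q
  · show w 1 = _ * sin q
    linear_combination -cos q * h - w 1 * sin_sq_add_cos_sq q

lemma en_mulVec_vec_lift_eq_inv {A M : Mat} (hMA : ∀ w, en (M *ᵥ w) = en (A *ᵥ w))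
    (hAM : ∀ w, en (A *ᵥ (M *ᵥ w)) = en w) {Ψ : ℝ → ℝ} (hΨ : IsLift M Ψ) (p : ℝ) :
    en (A *ᵥ _root_.vec (Ψ p)) = (en (A *ᵥ _root_.vec p))⁻¹ := by
  set c := (M *ᵥ _root_.vec p) 0 * cos (Ψ p) + (M *ᵥ _root_.vec p) 1 * sin (Ψ p)
  have hw : M *ᵥ _root_.vec p = c • _root_.vec (Ψ p) := eq_smul_vec_of_parr (hΨ p)
  have hc : |c| = en (A *ᵥ _root_.vec p) := by
    rw [← hMA, hw, en_smul, en_vec, mul_one]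
  have hcA : |c| * en (A *ᵥ _root_.vec (Ψ p)) = 1 := by
    rw [← en_smul, ← mulVec_smul, ← hw, hAM, en_vec]
  rw [← hc]
  exact eq_inv_of_mul_eq_one_right hcA

lemma en_antidiag_mulVec_eq_en_diag_mulVec (l : ℝ) (u : Fin 2 → ℝ) :
    en (!![0, l⁻¹; l, 0] *ᵥ u) = en (!![l, 0; 0, l⁻¹] *ᵥ u) := by
  simp [en, mulVec, dotProduct, Fin.sum_univ_two]
  ring_nf

lemma diag_mul_antidiag {l : ℝ} (hl : l ≠ 0) :
    !![l, 0; 0, l⁻¹] * !![0, l⁻¹; l, 0] = !![(0 : ℝ), 1; 1, 0] := by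
  rw [mul_fin_two]
  simp [hl]

lemma en_swap_mulVec (u : Fin 2 → ℝ) : en (!![(0 : ℝ), 1; 1, 0] *ᵥ u) = en u := by
  simp [en, mulVec, dotProduct, Fin.sum_univ_two]
  ring_nf

theorem stmt3_general (A S R : Mat) (l : ℝ) (hl : 1 < l)
    (hS : Sᵀ * S = 1) (hR : Rᵀ * R = 1)
    (hA : A = S * !![l, 0; 0, l⁻¹] * R)
    (M : Mat) (hM : M = R⁻¹ * !![0, l⁻¹; l, 0] * R)
    (Ψ : ℝ → ℝ) (hΨ : IsLift M Ψ) :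
    ∀ p : ℝ, Real.log (en (A.mulVec (vec (Ψ p)))) = - Real.log (en (A.mulVec (vec p))) := by
  have hRinv : R⁻¹ = Rᵀ := inv_eq_left_inv hR
  have hRRt : Rᵀᵀ * Rᵀ = 1 := by rw [transpose_transpose, mul_eq_one_comm.mp hR]
  have hMA (w : Fin 2 → ℝ) : en (M *ᵥ w) = en (A *ᵥ w) := by
    simp only [hM, hA, hRinv, ← mulVec_mulVec, en_mulVec_of_transpose_mul_self hRRt,
      en_mulVec_of_transpose_mul_self hS, en_antidiag_mulVec_eq_en_diag_mulVec]
  have hAM (w : Fin 2 → ℝ) : en (A *ᵥ (M *ᵥ w)) = en w := by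
    simp only [hA, hM, hRinv, ← mulVec_mulVec]
    rw [mulVec_mulVec _ R, mul_eq_one_comm.mp hR, one_mulVec, mulVec_mulVec _ !![l, 0; 0, l⁻¹],
      diag_mul_antidiag (by positivity), en_mulVec_of_transpose_mul_self hS, en_swap_mulVec,
      en_mulVec_of_transpose_mul_self hR]
  intro p
  rw [en_mulVec_vec_lift_eq_inv hMA hAM hΨ p, Real.log_inv]

/-- `ρ_A ∘ Ψ_A = -ρ_A` : `log ‖A v_{Ψ_A(p)}‖ = - log ‖A v_p‖`. -/
theorem stmt3 (A S R : Mat) (l : ℝ) (hl : 1 < l)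
    (hS : Sᵀ * S = 1) (hR : Rᵀ * R = 1)
    (hA : A = S * !![l, 0; 0, l⁻¹] * R) (hdet : A.det = 1)
    (M : Mat) (hM : M = R⁻¹ * !![0, l⁻¹; l, 0] * R)
    (Ψ : ℝ → ℝ) (hΨ : IsLift M Ψ) :
    ∀ p : ℝ, Real.log (en (A.mulVec (vec (Ψ p)))) = - Real.log (en (A.mulVec (vec p))) :=
  stmt3_general A S R l hl hS hR hA M hM Ψ hΨ
end
end

section
/- Let A = (A₁,…,Aₙ) ∈ SL(2,R)^n and let H̃₁,…,H̃ₙ : P^1 → P^1 be the implicit functions satisfying Φ_{R_{H̃ⱼ(p)}A}(p) = p. Then for every p ∈ P^1, the sum of derivatives Σⱼ H̃ⱼ'(p) equals 1 − Φ_{Aₙ}'(p) = 1 − 1/‖Aₙ v_p‖². -/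
open Real MeasureTheory intervalIntegral Matrix Polynomial

noncomputable section

/-!
Identify `ℝ²` with `ℂ`, so that a real matrix `B` acts as `z ↦ α z + β z̄` with
`|α|² - |β|² = det B`, and `Rot θ` as multiplication by `e^{iθ}`. For fixed `p`, the angles `θ`
for which `R_θ A` fixes the line of `v_p` are then the roots, in `z = e^{-2iθ}`, of a polynomial
of degree `n` whose constant and leading coefficients are `c` and `c̄` up to unimodular factors,
where `c = α(A₁)⋯α(Aₙ₋₁) · (Aₙ v_p)`. The `n` functions `H̃ⱼ(p)` provide all the roots, so
Vieta's formula gives `e^{-2i ∑ H̃ⱼ(p)} = ± e^{-2ip} c / c̄`, that is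
`∑ H̃ⱼ(p) = p - arg (Aₙ v_p) + const`. Finally `(arg (Aₙ v_p))' = det Aₙ / ‖Aₙ v_p‖²`.
-/

open Complex (I normSq)
open scoped Complex ComplexConjugate

def toC (w : Fin 2 → ℝ) : ℂ := ⟨w 0, w 1⟩

def holCoeff (B : Mat) : ℂ := ⟨(B 0 0 + B 1 1) / 2, (B 1 0 - B 0 1) / 2⟩

def antiholCoeff (B : Mat) : ℂ := ⟨(B 0 0 - B 1 1) / 2, (B 1 0 + B 0 1) / 2⟩

lemma toC_mulVec (B : Mat) (w : Fin 2 → ℝ) :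
    toC (B *ᵥ w) = holCoeff B * toC w + antiholCoeff B * conj (toC w) := by
  apply Complex.ext <;>
    simp only [toC, holCoeff, antiholCoeff, mulVec, dotProduct, Fin.sum_univ_two, Complex.add_re,
      Complex.add_im, Complex.mul_re, Complex.mul_im, Complex.conj_re, Complex.conj_im] <;> ring

lemma toC_vec (p : ℝ) : toC (vec p) = cexp (p * I) := by
  rw [Complex.exp_mul_I]
  apply Complex.ext <;> simp [toC, _root_.vec, Complex.cos_ofReal_re, Complex.sin_ofReal_re]

lemma toC_ne_zero {w : Fin 2 → ℝ} (hw : w ≠ 0) : toC w ≠ 0 := by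
  contrapose! hw
  ext i; fin_cases i
  exacts [congrArg Complex.re hw, congrArg Complex.im hw]

lemma toC_mulVec_vec_ne_zero {B : Mat} (hB : B.det ≠ 0) (p : ℝ) : toC (B *ᵥ vec p) ≠ 0 := by
  have hv : vec p ≠ 0 := fun h => Complex.exp_ne_zero (p * I) <| by rw [← toC_vec, h]; rfl
  exact toC_ne_zero fun h => hB (exists_mulVec_eq_zero_iff.1 ⟨vec p, hv, h⟩)

lemma en_sq (w : Fin 2 → ℝ) : en w ^ 2 = normSq (toC w) := by
  rw [en, Real.sq_sqrt (by positivity), Complex.normSq_apply, toC]; ring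

lemma normSq_holCoeff_sub_normSq_antiholCoeff (B : Mat) :
    normSq (holCoeff B) - normSq (antiholCoeff B) = B.det := by
  rw [Complex.normSq_apply, Complex.normSq_apply, holCoeff, antiholCoeff, det_fin_two]; ring

lemma holCoeff_ne_zero {B : Mat} (hB : 0 < B.det) : holCoeff B ≠ 0 := by
  intro h
  have := normSq_holCoeff_sub_normSq_antiholCoeff B
  rw [h, map_zero] at this
  linarith [Complex.normSq_nonneg (antiholCoeff B)]

lemma holCoeff_rot (θ : ℝ) : holCoeff (Rot θ) = cexp (θ * I) := by
  rw [Complex.exp_mul_I]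
  apply Complex.ext <;> simp [holCoeff, Rot, Complex.cos_ofReal_re, Complex.sin_ofReal_re]

lemma antiholCoeff_rot (θ : ℝ) : antiholCoeff (Rot θ) = 0 := by
  apply Complex.ext <;> simp [antiholCoeff, Rot]

lemma conj_exp_ofReal_mul_I (x : ℝ) : conj (cexp (x * I)) = cexp (-x * I) := by
  rw [← Complex.exp_conj, map_mul, Complex.conj_ofReal, Complex.conj_I, mul_neg, neg_mul]

lemma parr_iff (w : Fin 2 → ℝ) (q : ℝ) :
    parr w q ↔ cexp (-q * I) * toC w = cexp (q * I) * conj (toC w) := by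
  have hconj : cexp (q * I) * conj (toC w) = conj (cexp (-q * I) * toC w) := by
    rw [map_mul, ← Complex.ofReal_neg, conj_exp_ofReal_mul_I, Complex.ofReal_neg, neg_neg]
  rw [hconj, eq_comm, Complex.conj_eq_iff_im, ← Complex.ofReal_neg, Complex.mul_im,
    Complex.exp_ofReal_mul_I_re, Complex.exp_ofReal_mul_I_im, parr, toC, cos_neg, sin_neg]
  constructor <;> intro h <;> linarith

-- Factoring `cexp (θ * I)` out of every letter `Rot θ * B` of the word leaves polynomials in
-- `cexp (-θ * I) ^ 2`; the second component tracks the complex conjugate.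
def wordPoly (w : ℂ) : List Mat → ℂ[X] × ℂ[X]
  | [] => (C w, C (conj w))
  | B :: l =>
      (C (holCoeff B) * (wordPoly w l).1 + C (antiholCoeff B) * (wordPoly w l).2,
        X * (C (conj (holCoeff B)) * (wordPoly w l).2
          + C (conj (antiholCoeff B)) * (wordPoly w l).1))

lemma wordPoly_eval (x : Fin 2 → ℝ) (θ : ℝ) (l : List Mat) :
    toC (Wp θ l *ᵥ x)
        = cexp (θ * I) ^ l.length * (wordPoly (toC x) l).1.eval (cexp (-θ * I) ^ 2) ∧
      conj (toC (Wp θ l *ᵥ x))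
        = cexp (θ * I) ^ l.length * (wordPoly (toC x) l).2.eval (cexp (-θ * I) ^ 2) := by
  induction l with
  | nil => simp [Wp, wordPoly]
  | cons B l ih =>
    have hWp : Wp θ (B :: l) = Rot θ * B * Wp θ l := by simp [Wp, Matrix.mul_assoc]
    have hinv : cexp (θ * I) * cexp (-θ * I) = 1 := by rw [← Complex.exp_add]; simp
    obtain ⟨ih₁, ih₂⟩ := ih
    rw [hWp, ← mulVec_mulVec, ← mulVec_mulVec, toC_mulVec, toC_mulVec]
    simp only [holCoeff_rot, antiholCoeff_rot, wordPoly, map_add, map_mul, map_zero,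
      conj_exp_ofReal_mul_I, Complex.conj_conj, eval_add, eval_mul, eval_C, eval_X,
      List.length_cons]
    rw [ih₂, ih₁]
    constructor
    · ring
    · linear_combination -cexp (-θ * I) * cexp (θ * I) ^ l.length *
        (conj (holCoeff B) * (wordPoly (toC x) l).2.eval (cexp (-θ * I) ^ 2) +
          conj (antiholCoeff B) * (wordPoly (toC x) l).1.eval (cexp (-θ * I) ^ 2)) * hinv

lemma wordPoly_natDegree_le (w : ℂ) (l : List Mat) :
    (wordPoly w l).1.natDegree ≤ l.length - 1 ∧ (wordPoly w l).2.natDegree ≤ l.length := by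
  induction l with
  | nil => simp [wordPoly]
  | cons B l ih =>
    obtain ⟨ih₁, ih₂⟩ := ih
    have h₁ : (wordPoly w l).1.natDegree ≤ l.length := ih₁.trans (Nat.sub_le _ _)
    constructor
    · exact natDegree_add_le_of_degree_le ((natDegree_C_mul_le _ _).trans h₁)
        ((natDegree_C_mul_le _ _).trans ih₂)
    · refine (natDegree_mul_le_of_le natDegree_X_le (natDegree_add_le_of_degree_le
        ((natDegree_C_mul_le _ _).trans ih₂) ((natDegree_C_mul_le _ _).trans h₁))).trans ?_
      simp [add_comm]

lemma wordPoly_snd_coeff_zero (w : ℂ) {l : List Mat} (hl : l ≠ []) :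
    (wordPoly w l).2.coeff 0 = 0 := by
  cases l with
  | nil => contradiction
  | cons B l => simp [wordPoly]

lemma wordPoly_fst_coeff_zero_append (w : ℂ) (l : List Mat) (B : Mat) :
    (wordPoly w (l ++ [B])).1.coeff 0
      = (l.map holCoeff).prod * (holCoeff B * w + antiholCoeff B * conj w) := by
  induction l with
  | nil => simp [wordPoly]
  | cons B' l ih =>
    simp [wordPoly, ih, wordPoly_snd_coeff_zero w (List.concat_ne_nil B l), mul_assoc]

lemma wordPoly_snd_coeff_length (w : ℂ) {l : List Mat} (hl : l ≠ []) :
    (wordPoly w l).2.coeff l.length = conj ((wordPoly w l).1.coeff 0) := by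
  induction l with
  | nil => contradiction
  | cons B l ih =>
    rcases eq_or_ne l [] with rfl | hl'
    · simp [wordPoly, mul_comm]
    have hP : (wordPoly w l).1.coeff l.length = 0 := by
      refine coeff_eq_zero_of_natDegree_lt ((wordPoly_natDegree_le w l).1.trans_lt ?_)
      exact Nat.sub_lt (List.length_pos_iff.2 hl') one_pos
    simp [wordPoly, hP, ih hl', wordPoly_snd_coeff_zero w hl']

lemma Polynomial.coeff_zero_eq_prod_of_eval_eq_zero {K : Type*} [Field K] {f : K[X]}
    {S : Finset K} (hf : f ≠ 0) (hS : ∀ x ∈ S, f.eval x = 0) (hcard : f.natDegree ≤ S.card) :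
    f.coeff 0 = (-1) ^ f.natDegree * f.leadingCoeff * ∏ x ∈ S, x := by
  have hroots := roots_eq_of_natDegree_le_card_of_ne_zero hS hcard hf
  have hsplit : f.Splits := by
    rw [splits_iff_card_roots]
    exact le_antisymm (card_roots' f) (by rwa [hroots])
  rw [hsplit.coeff_zero_eq_leadingCoeff_mul_prod_roots, hroots, Finset.prod_val]
  rfl

def fixPoly (p : ℝ) (l : List Mat) : ℂ[X] :=
  C (cexp (-p * I)) * (wordPoly (cexp (p * I)) l).1
    - C (cexp (p * I)) * (wordPoly (cexp (p * I)) l).2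

lemma fixPoly_eval_eq_zero {p θ : ℝ} {l : List Mat} (h : parr (Wp θ l *ᵥ vec p) p) :
    (fixPoly p l).eval (cexp (-θ * I) ^ 2) = 0 := by
  obtain ⟨h₁, h₂⟩ := wordPoly_eval (vec p) θ l
  rw [toC_vec] at h₁ h₂
  have h := (parr_iff _ p).1 h
  rw [h₂, h₁] at h
  have hne : cexp (θ * I) ^ l.length ≠ 0 := pow_ne_zero _ (Complex.exp_ne_zero _)
  simp only [fixPoly, eval_sub, eval_mul, eval_C]
  exact (mul_eq_zero.1 (by linear_combination h)).resolve_left hne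

lemma fixPoly_natDegree_le (p : ℝ) (l : List Mat) : (fixPoly p l).natDegree ≤ l.length := by
  obtain ⟨h₁, h₂⟩ := wordPoly_natDegree_le (cexp (p * I)) l
  simpa [fixPoly] using natDegree_sub_le_of_le
    ((natDegree_C_mul_le _ _).trans (h₁.trans (Nat.sub_le _ _))) ((natDegree_C_mul_le _ _).trans h₂)

lemma fixPoly_coeff_zero (p : ℝ) {l : List Mat} (hl : l ≠ []) :
    (fixPoly p l).coeff 0 = cexp (-p * I) * (wordPoly (cexp (p * I)) l).1.coeff 0 := by
  simp [fixPoly, wordPoly_snd_coeff_zero _ hl]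

lemma fixPoly_coeff_length (p : ℝ) {l : List Mat} (hl : l ≠ []) :
    (fixPoly p l).coeff l.length
      = -cexp (p * I) * conj ((wordPoly (cexp (p * I)) l).1.coeff 0) := by
  have hP : (wordPoly (cexp (p * I)) l).1.coeff l.length = 0 := by
    refine coeff_eq_zero_of_natDegree_lt ((wordPoly_natDegree_le _ l).1.trans_lt ?_)
    exact Nat.sub_lt (List.length_pos_iff.2 hl) one_pos
  simp [fixPoly, hP, wordPoly_snd_coeff_length _ hl]

lemma exp_neg_mul_I_sq_injective {ι : Type*} {θ : ι → ℝ}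
    (hθ : ∀ i j, i ≠ j → ∀ k : ℤ, θ i ≠ θ j + k * π) :
    Function.Injective fun j => cexp (-θ j * I) ^ 2 := by
  intro i j hij
  by_contra hne
  simp only [← Complex.exp_nat_mul, Complex.exp_eq_exp_iff_exists_int] at hij
  obtain ⟨k, hk⟩ := hij
  apply hθ i j hne (-k)
  have him : -(2 * θ i) = -(2 * θ j) + k * (2 * π) := by simpa using congrArg Complex.im hk
  push_cast
  linarith

-- Vieta's formula for `fixPoly`, whose constant and leading coefficients are conjugate up to
-- unimodular factors.
lemma exp_sum_mul_conj_eq {ι : Type*} [Fintype ι] {p : ℝ} {l : List Mat} (hl : l ≠ [])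
    (hc : (wordPoly (cexp (p * I)) l).1.coeff 0 ≠ 0) (θ : ι → ℝ) (hι : Fintype.card ι = l.length)
    (hfix : ∀ j, parr (Wp (θ j) l *ᵥ vec p) p)
    (hdist : ∀ i j, i ≠ j → ∀ k : ℤ, θ i ≠ θ j + k * π) :
    (-1) ^ (l.length + 1) * cexp (-2 * (∑ j, θ j) * I)
        * conj ((wordPoly (cexp (p * I)) l).1.coeff 0)
      = cexp (-2 * p * I) * (wordPoly (cexp (p * I)) l).1.coeff 0 := by
  classical
  set c := (wordPoly (cexp (p * I)) l).1.coeff 0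
  have hlead : (fixPoly p l).coeff l.length ≠ 0 := by
    rw [fixPoly_coeff_length p hl]
    exact mul_ne_zero (neg_ne_zero.2 (Complex.exp_ne_zero _)) (by simpa using hc)
  have hdeg : (fixPoly p l).natDegree = l.length :=
    le_antisymm (fixPoly_natDegree_le p l) (le_natDegree_of_ne_zero hlead)
  have hinj := exp_neg_mul_I_sq_injective hdist
  have hvieta := Polynomial.coeff_zero_eq_prod_of_eval_eq_zero
    (f := fixPoly p l) (S := Finset.univ.image fun j => cexp (-θ j * I) ^ 2)
    (fun h => hlead (by rw [h]; exact coeff_zero _))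
    (by simpa using fun j => fixPoly_eval_eq_zero (hfix j))
    (by rw [Finset.card_image_of_injective _ hinj, hdeg, Finset.card_univ, hι])
  have hprod : ∏ j, cexp (-θ j * I) ^ 2 = cexp (-2 * (∑ j, θ j) * I) := by
    simp_rw [← Complex.exp_nat_mul, ← Complex.exp_sum]
    push_cast
    rw [Finset.mul_sum, Finset.sum_mul]
    exact congrArg cexp (Finset.sum_congr rfl fun j _ => by ring)
  rw [Finset.prod_image fun i _ j _ h => hinj h, hprod, leadingCoeff, hdeg,
    fixPoly_coeff_zero p hl, fixPoly_coeff_length p hl] at hvieta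
  have hinv : cexp (p * I) * cexp (-p * I) = 1 := by rw [← Complex.exp_add]; simp
  have hsq : cexp (-2 * p * I) = cexp (-p * I) ^ 2 := by
    rw [← Complex.exp_nat_mul]; ring_nf
  rw [hsq]
  linear_combination -cexp (-p * I) * hvieta
    - (-1) ^ (l.length + 1) * cexp (-2 * (∑ j, θ j) * I) * conj c * hinv

-- If `S` is the phase of `c` up to a constant, `S' = 1 - (arg c)'`, and `(arg c)' = Im (c' / c)`.
lemma HasDerivAt.eq_one_sub_im_div_of_mul_conj_eq {S : ℝ → ℝ} {c : ℝ → ℂ} {S' p : ℝ}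
    {c' σ : ℂ} (hS : HasDerivAt S S' p) (hc : HasDerivAt c c' p) (hcp : c p ≠ 0)
    (h : ∀ q, σ * cexp (-2 * S q * I) * conj (c q) = cexp (-2 * q * I) * c q) :
    S' = 1 - (c' / c p).im := by
  have hL := (((hS.ofReal_comp.const_mul (-2)).mul_const I).cexp.const_mul σ).fun_mul hc.star
  have hR := (((hasDerivAt_id (p : ℂ)).comp_ofReal.const_mul (-2)).mul_const I).cexp.fun_mul hc
  simp only [Function.id_def, mul_one] at hR
  rw [show (fun q : ℝ => σ * cexp (-2 * S q * I) * star (c q))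
    = fun q : ℝ => cexp (-2 * q * I) * c q from funext h] at hL
  have hderiv := hL.unique hR
  set r := c' / c p
  have hc' : c' = r * c p := by simp [r, hcp]
  have hFc : cexp (-2 * p * I) * c p ≠ 0 := mul_ne_zero (Complex.exp_ne_zero _) hcp
  have key : -2 * S' * I + conj r = -2 * I + r := by
    refine mul_left_cancel₀ hFc ?_
    rw [hc', Complex.star_def, map_mul] at hderiv
    linear_combination hderiv - (-2 * S' * I + conj r) * h p
  have him : -(2 * S') + -r.im = -2 + r.im := by simpa using congrArg Complex.im key
  linarith

lemma hasDerivAt_toC_mulVec_vec (B : Mat) (p : ℝ) :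
    HasDerivAt (fun q => toC (B *ᵥ vec q)) (toC (B *ᵥ ![-sin p, cos p])) p := by
  have hfun : (fun q => toC (B *ᵥ vec q)) = fun q =>
      ((B 0 0 * cos q + B 0 1 * sin q : ℝ) : ℂ)
        + ((B 1 0 * cos q + B 1 1 * sin q : ℝ) : ℂ) * I := by
    funext q
    apply Complex.ext <;> simp [toC, mulVec, dotProduct, Fin.sum_univ_two, _root_.vec,
      Complex.cos_ofReal_re, Complex.sin_ofReal_re]
  rw [hfun]
  refine ((((hasDerivAt_cos p).const_mul (B 0 0)).fun_add
    ((hasDerivAt_sin p).const_mul (B 0 1))).ofReal_comp.fun_add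
    ((((hasDerivAt_cos p).const_mul (B 1 0)).fun_add
      ((hasDerivAt_sin p).const_mul (B 1 1))).ofReal_comp.mul_const I)).congr_deriv ?_
  apply Complex.ext <;> simp [toC, mulVec, dotProduct, Fin.sum_univ_two, Complex.cos_ofReal_re,
    Complex.sin_ofReal_re]

lemma im_div_toC_mulVec_vec (B : Mat) (p : ℝ) :
    (toC (B *ᵥ ![-sin p, cos p]) / toC (B *ᵥ vec p)).im = B.det / en (B *ᵥ vec p) ^ 2 := by
  rw [Complex.div_im, ← sub_div, en_sq]
  congr 1
  simp only [toC, mulVec, dotProduct, Fin.sum_univ_two, _root_.vec, det_fin_two, cons_val_zero, cons_val_one, cons_val_fin_one, mul_neg]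
  linear_combination (B 0 0 * B 1 1 - B 0 1 * B 1 0) * sin_sq_add_cos_sq p

/-- The sum of the derivatives of the implicit functions `H̃ⱼ` equals
`1 - Φ_{Aₙ}'(p) = 1 - 1/‖Aₙ v_p‖²`. -/
theorem stmt13 (n : ℕ) (A : Fin (n+1) → Mat) (hdet : ∀ i, (A i).det = 1)
    (Htil : Fin (n+1) → ℝ → ℝ)
    (hdiff : ∀ j, Differentiable ℝ (Htil j))
    (hfix : ∀ j (p : ℝ), parr ((Wp (Htil j p) (List.ofFn A)).mulVec (vec p)) p)
    (hdist : ∀ (p : ℝ) (i j : Fin (n+1)), i ≠ j → ∀ k : ℤ, Htil i p ≠ Htil j p + k * π) :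
    ∀ p : ℝ, ∑ j : Fin (n+1), deriv (Htil j) p
      = 1 - 1 / en ((A (Fin.last n)).mulVec (vec p)) ^ 2 := by
  intro p
  set B := A (Fin.last n)
  set K := ((List.ofFn fun i : Fin n => A i.castSucc).map holCoeff).prod
  have hK : K ≠ 0 := List.prod_ne_zero <| by
    simpa using fun i => holCoeff_ne_zero (by rw [hdet]; exact one_pos)
  have hu : ∀ q, toC (B *ᵥ _root_.vec q) ≠ 0 :=
    toC_mulVec_vec_ne_zero (by rw [hdet]; exact one_ne_zero)
  have hc : ∀ q : ℝ,
      (wordPoly (cexp (q * I)) (List.ofFn A)).1.coeff 0 = K * toC (B *ᵥ _root_.vec q) := by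
    intro q
    rw [List.ofFn_succ', List.concat_eq_append, wordPoly_fst_coeff_zero_append, toC_mulVec,
      toC_vec]
  have hphase : ∀ q : ℝ, (-1) ^ (n + 1 + 1) * cexp (-2 * ((∑ j, Htil j q : ℝ) : ℂ) * I)
      * conj (K * toC (B *ᵥ _root_.vec q)) = cexp (-2 * q * I) * (K * toC (B *ᵥ _root_.vec q)) := by
    intro q
    have h := exp_sum_mul_conj_eq (mt List.ofFn_eq_nil_iff.1 n.succ_ne_zero)
      (by rw [hc]; exact mul_ne_zero hK (hu q)) (fun j => Htil j q) (by simp) (fun j => hfix j q)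
      (hdist q)
    rwa [hc, List.length_ofFn] at h
  have hS : HasDerivAt (fun q => ∑ j, Htil j q) (∑ j, deriv (Htil j) p) p :=
    HasDerivAt.fun_sum fun j _ => (hdiff j p).hasDerivAt
  rw [hS.eq_one_sub_im_div_of_mul_conj_eq ((hasDerivAt_toC_mulVec_vec B p).const_mul K)
    (mul_ne_zero hK (hu p)) hphase, mul_div_mul_left _ _ hK, im_div_toC_mulVec_vec, hdet]
end
end

section
/- The matrix R_θ(A₁,…,Aₙ) := (R_θA₁)⋯(R_θAₙ) is elliptic if and only if θ (mod π) is not in the range of any of the n implicit functions H̃ⱼ; moreover if θ = H̃ⱼ(p) for some j and p then the logarithm of the spectral radius ρ(R_θA) equals |log‖R_θA · v_p‖|, and otherwise ρ(R_θA) = 0. -/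
open Real MeasureTheory intervalIntegral Matrix Polynomial

noncomputable section

/-! Every factor has determinant one, so the eigenvalues of `B = R_θA` are the roots `z, z⁻¹` of
`X² - tr B · X + 1` and `ρ(B) = max (|z|, |z|⁻¹)`. A real eigenvector is a multiple of some `v_p`,
and `B v_p ∈ ℓ_p` happens exactly when `θ ≡ H̃ⱼ(p) mod π`; then `B v_p = c v_p` with
`|c| = ‖B v_p‖`. Otherwise the two roots are non-real, hence both complex conjugate and inverse to
each other, so `|z| = 1`. -/

lemma eq_or_eq_inv_of_sq_sub_mul_add_one_eq_zero {K : Type*} [Field K] {t z w : K}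
    (hz : z ^ 2 - t * z + 1 = 0) : w ^ 2 - t * w + 1 = 0 ↔ w = z ∨ w = z⁻¹ := by
  have hz0 : z ≠ 0 := by rintro rfl; simp at hz
  have hsum : t = z + z⁻¹ := by field_simp; linear_combination -hz
  rw [hsum, ← sub_eq_zero (a := w), ← sub_eq_zero (a := w), ← mul_eq_zero]
  constructor <;> intro h
  · linear_combination h + mul_inv_cancel₀ hz0
  · linear_combination h - mul_inv_cancel₀ hz0

lemma Real.log_max_inv_eq_abs_log {x : ℝ} (hx : 0 < x) : Real.log (max x x⁻¹) = |Real.log x| := by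
  rcases le_total x 1 with h | h
  · rw [max_eq_right (h.trans (one_le_inv₀ hx |>.mpr h)), Real.log_inv,
      abs_of_nonpos (Real.log_nonpos hx.le h)]
  · rw [max_eq_left ((inv_le_one_of_one_le₀ h).trans h), abs_of_nonneg (Real.log_nonneg h)]

lemma Matrix.exists_mulVec_eq_smul_iff_isRoot_charpoly {K n : Type*} [Field K] [Fintype n]
    [DecidableEq n] (M : Matrix n n K) (c : K) :
    (∃ w : n → K, w ≠ 0 ∧ M *ᵥ w = c • w) ↔ M.charpoly.IsRoot c := by
  rw [IsRoot.def, eval_charpoly, ← exists_mulVec_eq_zero_iff]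
  refine exists_congr fun w => and_congr_right fun _ => ?_
  rw [sub_mulVec, scalar_apply, ← smul_one_eq_diagonal, smul_mulVec, one_mulVec, sub_eq_zero,
    eq_comm]

lemma Matrix.isRoot_charpoly_iff_of_det_eq_one {R : Type*} [CommRing R] [Nontrivial R]
    (M : Matrix (Fin 2) (Fin 2) R) (hM : M.det = 1) (z : R) :
    M.charpoly.IsRoot z ↔ z ^ 2 - M.trace * z + 1 = 0 := by
  simp [charpoly_fin_two, hM]

lemma det_rot (θ : ℝ) : (Rot θ).det = 1 := by
  simp [Rot, det_fin_two_of, ← sq, Real.cos_sq_add_sin_sq]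

lemma det_wp (θ : ℝ) (l : List Mat) (hl : ∀ B ∈ l, B.det = 1) : (Wp θ l).det = 1 := by
  induction l with
  | nil => simp [Wp]
  | cons B l ih =>
    simp only [List.forall_mem_cons] at hl
    simp only [Wp, List.map_cons, List.prod_cons, det_mul, det_rot, hl.1, one_mul] at ih ⊢
    exact ih hl.2

lemma vec_ne_zero (p : ℝ) : vec p ≠ 0 := fun h => by
  have h0 := congrFun h 0
  have h1 := congrFun h 1
  simp only [_root_.vec, cons_val_zero, cons_val_one, Pi.zero_apply] at h0 h1
  simpa [h0, h1] using Real.sin_sq_add_cos_sq p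

lemma en_smul_vec (c p : ℝ) : en (c • vec p) = |c| := by
  simp only [en, _root_.vec, Pi.smul_apply, smul_eq_mul, cons_val_zero, cons_val_one]
  rw [mul_pow, mul_pow, ← mul_add, Real.cos_sq_add_sin_sq, mul_one, Real.sqrt_sq_eq_abs]

lemma parr_iff_exists_eq_smul_vec (w : Fin 2 → ℝ) (q : ℝ) :
    parr w q ↔ ∃ c : ℝ, w = c • vec q := by
  constructor
  · intro h
    refine ⟨w 0 * Real.cos q + w 1 * Real.sin q, funext fun i => ?_⟩
    fin_cases i <;> simp only [parr] at h <;>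
      simp only [Fin.zero_eta, Fin.mk_one, _root_.vec, Pi.smul_apply, cons_val_zero, cons_val_one,
        cons_val_fin_one, smul_eq_mul]
    · linear_combination Real.sin q * h - w 0 * Real.sin_sq_add_cos_sq q
    · linear_combination -Real.cos q * h - w 1 * Real.sin_sq_add_cos_sq q
  · rintro ⟨c, rfl⟩
    simp only [parr, _root_.vec, Pi.smul_apply, cons_val_zero, cons_val_one, cons_val_fin_one,
      smul_eq_mul]
    ring

lemma exists_eq_smul_vec {w : Fin 2 → ℝ} (hw : w ≠ 0) : ∃ p r : ℝ, r ≠ 0 ∧ w = r • vec p := by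
  set z : ℂ := ⟨w 0, w 1⟩
  have hz : z ≠ 0 := fun h => hw <| funext fun i => by
    fin_cases i
    · exact congrArg Complex.re h
    · exact congrArg Complex.im h
  refine ⟨z.arg, ‖z‖, norm_ne_zero_iff.mpr hz, funext fun i => ?_⟩
  fin_cases i <;>
    simp [_root_.vec, Complex.cos_arg hz, Complex.sin_arg,
      mul_div_cancel₀ _ (norm_ne_zero_iff.mpr hz), z]

lemma exists_eigenvector_iff_exists_parr (B : Mat) :
    (∃ (c : ℝ) (w : Fin 2 → ℝ), w ≠ 0 ∧ B *ᵥ w = c • w) ↔ ∃ p, parr (B *ᵥ vec p) p := by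
  simp only [parr_iff_exists_eq_smul_vec]
  constructor
  · rintro ⟨c, w, hw, hBw⟩
    obtain ⟨p, r, hr, rfl⟩ := exists_eq_smul_vec hw
    refine ⟨p, c, smul_right_injective _ hr ?_⟩
    simpa only [mulVec_smul, smul_comm r c] using hBw
  · rintro ⟨p, c, hc⟩
    exact ⟨c, vec p, vec_ne_zero p, hc⟩

lemma isRoot_charpoly_map_iff {B : Mat} (hB : B.det = 1) (w : ℂ) :
    (B.charpoly.map (algebraMap ℝ ℂ)).IsRoot w ↔ w ^ 2 - B.trace * w + 1 = 0 := by
  simp [charpoly_fin_two, hB]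

lemma spectralRad_eq_max_of_isRoot {B : Mat} (hB : B.det = 1) {z : ℂ}
    (hz : z ^ 2 - B.trace * z + 1 = 0) : spectralRad B = max ‖z‖ ‖z‖⁻¹ := by
  have hnorms : {x : ℝ | ∃ w : ℂ, (B.charpoly.map (algebraMap ℝ ℂ)).IsRoot w ∧ x = ‖w‖}
      = {‖z‖, ‖z‖⁻¹} := by
    ext x
    simp only [isRoot_charpoly_map_iff hB, eq_or_eq_inv_of_sq_sub_mul_add_one_eq_zero hz,
      Set.mem_ofPred_eq, Set.mem_insert_iff, Set.mem_singleton_iff]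
    constructor
    · rintro ⟨w, rfl | rfl, rfl⟩ <;> simp
    · rintro (rfl | rfl)
      exacts [⟨z, .inl rfl, rfl⟩, ⟨z⁻¹, .inr rfl, (norm_inv z).symm⟩]
  rw [spectralRad, hnorms, csSup_pair]

lemma log_spectralRad_of_mulVec_eq_smul {B : Mat} (hB : B.det = 1) {v : Fin 2 → ℝ} (hv : v ≠ 0)
    {c : ℝ} (hc : B *ᵥ v = c • v) : Real.log (spectralRad B) = |Real.log (|c|)| := by
  have hroot : c ^ 2 - B.trace * c + 1 = 0 :=
    (isRoot_charpoly_iff_of_det_eq_one B hB c).mp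
      ((exists_mulVec_eq_smul_iff_isRoot_charpoly B c).mp ⟨v, hv, hc⟩)
  have hc0 : c ≠ 0 := by rintro rfl; simp at hroot
  rw [spectralRad_eq_max_of_isRoot hB (z := c) (by exact_mod_cast hroot), Complex.norm_real,
    Real.norm_eq_abs, Real.log_max_inv_eq_abs_log (abs_pos.mpr hc0)]

lemma spectralRad_eq_one_of_not_exists_eigenvector {B : Mat} (hB : B.det = 1)
    (h : ¬ ∃ (c : ℝ) (w : Fin 2 → ℝ), w ≠ 0 ∧ B *ᵥ w = c • w) : spectralRad B = 1 := by
  obtain ⟨z, hz⟩ : ∃ z : ℂ, z ^ 2 - B.trace * z + 1 = 0 := by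
    simp only [← isRoot_charpoly_map_iff hB]
    refine Complex.exists_root ?_
    rw [degree_map, charpoly_degree_eq_dim]
    simp
  have hconj : (starRingEnd ℂ z) ^ 2 - B.trace * starRingEnd ℂ z + 1 = 0 := by
    simpa using congrArg (starRingEnd ℂ) hz
  rcases (eq_or_eq_inv_of_sq_sub_mul_add_one_eq_zero hz).mp hconj with hreal | hinv
  · refine absurd ⟨z.re, ?_⟩ h
    rw [exists_mulVec_eq_smul_iff_isRoot_charpoly, isRoot_charpoly_iff_of_det_eq_one B hB,
      ← Complex.ofReal_inj]
    push_cast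
    rwa [Complex.conj_eq_iff_re.mp hreal]
  · have hz0 : z ≠ 0 := by rintro rfl; simp at hz
    have hnorm : ‖z‖ ^ 2 = 1 := by
      rw [← Complex.ofReal_inj, Complex.ofReal_pow, ← Complex.mul_conj', hinv, mul_inv_cancel₀ hz0]
      rfl
    rw [spectralRad_eq_max_of_isRoot hB hz,
      (pow_eq_one_iff_of_nonneg (norm_nonneg z) two_ne_zero).mp hnorm, inv_one, max_self]

theorem stmt14_general (n : ℕ) (A : Fin (n+1) → Mat) (hdet : ∀ i, (A i).det = 1)
    (Htil : Fin (n+1) → ℝ → ℝ)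
    (hfix : ∀ j (p : ℝ), parr ((Wp (Htil j p) (List.ofFn A)).mulVec (vec p)) p)
    (hall : ∀ (θ p : ℝ),
      parr ((Wp θ (List.ofFn A)).mulVec (vec p)) p
        ↔ ∃ (j : Fin (n+1)) (k : ℤ), θ = Htil j p + k * π) :
    (∀ θ : ℝ,
      (¬ ∃ (c : ℝ) (w : Fin 2 → ℝ), w ≠ 0 ∧ (Wp θ (List.ofFn A)).mulVec w = c • w)
        ↔ ∀ (j : Fin (n+1)) (p : ℝ) (k : ℤ), θ ≠ Htil j p + k * π) ∧
    (∀ (j : Fin (n+1)) (p : ℝ),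
      Real.log (spectralRad (Wp (Htil j p) (List.ofFn A)))
        = |Real.log (en ((Wp (Htil j p) (List.ofFn A)).mulVec (vec p)))|) ∧
    (∀ θ : ℝ, (∀ (j : Fin (n+1)) (p : ℝ) (k : ℤ), θ ≠ Htil j p + k * π) →
      Real.log (spectralRad (Wp θ (List.ofFn A))) = 0) := by
  have hdetW (θ : ℝ) : (Wp θ (List.ofFn A)).det = 1 :=
    det_wp θ _ fun B hB => by obtain ⟨i, rfl⟩ := List.mem_ofFn.mp hB; exact hdet i
  have helliptic (θ : ℝ) :
      (¬ ∃ (c : ℝ) (w : Fin 2 → ℝ), w ≠ 0 ∧ (Wp θ (List.ofFn A)).mulVec w = c • w)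
        ↔ ∀ (j : Fin (n+1)) (p : ℝ) (k : ℤ), θ ≠ Htil j p + k * π := by
    rw [exists_eigenvector_iff_exists_parr]
    simp only [hall, not_exists, ne_eq]
    exact forall_comm
  refine ⟨helliptic, fun j p => ?_, fun θ hθ => ?_⟩
  · obtain ⟨c, hc⟩ := (parr_iff_exists_eq_smul_vec _ _).mp (hfix j p)
    rw [hc, en_smul_vec]
    exact log_spectralRad_of_mulVec_eq_smul (hdetW _) (vec_ne_zero p) hc
  · rw [spectralRad_eq_one_of_not_exists_eigenvector (hdetW θ) ((helliptic θ).mpr hθ), Real.log_one]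

/-- `R_θA` is elliptic iff `θ` (mod π) is in the range of no `H̃ⱼ`; when
`θ = H̃ⱼ(p)` the log-spectral radius is `|log ‖R_θA v_p‖|`, and it vanishes otherwise. -/
theorem stmt14 (n : ℕ) (A : Fin (n+1) → Mat) (hdet : ∀ i, (A i).det = 1)
    (Htil : Fin (n+1) → ℝ → ℝ)
    (hdiff : ∀ j, Differentiable ℝ (Htil j))
    (hfix : ∀ j (p : ℝ), parr ((Wp (Htil j p) (List.ofFn A)).mulVec (vec p)) p)
    (hdist : ∀ (p : ℝ) (i j : Fin (n+1)), i ≠ j → ∀ k : ℤ, Htil i p ≠ Htil j p + k * π)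
    (hall : ∀ (θ p : ℝ),
      parr ((Wp θ (List.ofFn A)).mulVec (vec p)) p
        ↔ ∃ (j : Fin (n+1)) (k : ℤ), θ = Htil j p + k * π) :
    (∀ θ : ℝ,
      (¬ ∃ (c : ℝ) (w : Fin 2 → ℝ), w ≠ 0 ∧ (Wp θ (List.ofFn A)).mulVec w = c • w)
        ↔ ∀ (j : Fin (n+1)) (p : ℝ) (k : ℤ), θ ≠ Htil j p + k * π) ∧
    (∀ (j : Fin (n+1)) (p : ℝ),
      Real.log (spectralRad (Wp (Htil j p) (List.ofFn A)))
        = |Real.log (en ((Wp (Htil j p) (List.ofFn A)).mulVec (vec p)))|) ∧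
    (∀ θ : ℝ, (∀ (j : Fin (n+1)) (p : ℝ) (k : ℤ), θ ≠ Htil j p + k * π) →
      Real.log (spectralRad (Wp θ (List.ofFn A))) = 0) :=
  stmt14_general n A hdet Htil hfix hall
end
end
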